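/- arXiv:1202.3433 — 2 statements merged into one kernel-verified Lean document; each statement's English description precedes it below -/
import Mathlib

section
/- Let n ≥ 1 and let P be an n × n matrix over 𝔽₂ with P Pᵀ = I, and let G be the associated bipartite graph on V = L ⊔ R. Then for every subset D ⊆ R and every vertex i ∈ R with i ∉ D, the cardinality |Odd(D) ∩ N_i| is even. -/
/-!
Over `𝔽₂` the parity of a count is a sum. If `d` is the indicator vector of `D ∩ R`, a left
vertex `a` lies in `Odd(D)` exactly when `(P d)_a = 1`, and `N_i = {a | P a i = 1}`. Hence
`|Odd(D) ∩ N_i| ≡ ∑_a P a i (P d)_a = (Pᵀ P d)_i = d_i = 0`, since `Pᵀ P = I` and `i ∉ D`.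
-/

open Matrix

/-- The bipartite graph on `Fin n ⊕ Fin n` (left copy `L = Sum.inl`, right copy
`R = Sum.inr`) in which `Sum.inl a` is adjacent to `Sum.inr b` iff `P a b = 1`,
and there are no other edges. -/
def bipGraph (n : ℕ) (P : Matrix (Fin n) (Fin n) (ZMod 2)) :
    SimpleGraph (Fin n ⊕ Fin n) where
  Adj u v := (∃ a b, P a b = 1 ∧ u = Sum.inl a ∧ v = Sum.inr b) ∨
             (∃ a b, P a b = 1 ∧ u = Sum.inr b ∧ v = Sum.inl a)
  symm := by
    constructor
    rintro u v (⟨a, b, h, rfl, rfl⟩ | ⟨a, b, h, rfl, rfl⟩)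
    · exact Or.inr ⟨a, b, h, rfl, rfl⟩
    · exact Or.inl ⟨a, b, h, rfl, rfl⟩
  loopless := by
    constructor
    rintro u (⟨a, b, h, rfl, h2⟩ | ⟨a, b, h, rfl, h2⟩) <;> simp at h2

/-- The odd neighbourhood of a set `S`: the set of vertices `v` such that the number
of neighbours of `v` lying in `S` is odd. -/
def oddNbhd {V : Type*} (G : SimpleGraph V) (S : Set V) : Set V :=
  {v | Odd (G.neighborSet v ∩ S).ncard}

namespace ZMod

theorem natCast_ncard_setOf_eq_one {ι : Type*} [Fintype ι] (x : ι → ZMod 2) :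
    ({i | x i = 1}.ncard : ZMod 2) = ∑ i, x i := by
  classical
  rw [Set.ncard_eq_toFinset_card', Set.toFinset_ofPred, Finset.natCast_card_filter]
  refine Finset.sum_congr rfl fun i _ => ?_
  generalize x i = y
  revert y
  decide

theorem mul_eq_one_iff_eq_one_and_eq_one (x y : ZMod 2) : x * y = 1 ↔ x = 1 ∧ y = 1 := by
  revert x y
  decide

end ZMod

theorem Set.indicator_one_apply_eq_one_iff {ι M : Type*} [MulZeroOneClass M] [NeZero (1 : M)]
    (s : Set ι) (i : ι) : s.indicator (1 : ι → M) i = 1 ↔ i ∈ s := by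
  by_cases hi : i ∈ s <;> simp [hi]

namespace bipGraph

variable {n : ℕ} (P : Matrix (Fin n) (Fin n) (ZMod 2))

theorem neighborSet_inl (a : Fin n) :
    (bipGraph n P).neighborSet (.inl a) = .inr '' {b | P a b = 1} := by
  ext v
  simp only [SimpleGraph.mem_neighborSet, bipGraph, Set.mem_image, Set.mem_ofPred_eq]
  aesop

theorem neighborSet_inr (b : Fin n) :
    (bipGraph n P).neighborSet (.inr b) = .inl '' {a | P a b = 1} := by
  ext v
  simp only [SimpleGraph.mem_neighborSet, bipGraph, Set.mem_image, Set.mem_ofPred_eq]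
  aesop

theorem inl_mem_oddNbhd_iff (D : Set (Fin n ⊕ Fin n)) (a : Fin n) :
    .inl a ∈ oddNbhd (bipGraph n P) D ↔ (P *ᵥ (Sum.inr ⁻¹' D).indicator 1) a = 1 := by
  have hneighbors : {b | P a b = 1} ∩ Sum.inr ⁻¹' D
      = {b | P a b * (Sum.inr ⁻¹' D).indicator 1 b = 1} := by
    ext b
    simp only [Set.mem_inter_iff, Set.mem_ofPred_eq, ZMod.mul_eq_one_iff_eq_one_and_eq_one,
      Set.indicator_one_apply_eq_one_iff]
  rw [oddNbhd, Set.mem_ofPred_eq, neighborSet_inl, ← Set.image_inter_preimage,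
    Set.ncard_image_of_injective _ Sum.inr_injective, ← ZMod.natCast_eq_one_iff_odd, hneighbors,
    ZMod.natCast_ncard_setOf_eq_one]
  rfl

end bipGraph

theorem stmt1_general (n : ℕ) (P : Matrix (Fin n) (Fin n) (ZMod 2))
    (hP : P * Pᵀ = 1) (D : Set (Fin n ⊕ Fin n))
    (i : Fin n) (hi : Sum.inr i ∉ D) :
    Even ((oddNbhd (bipGraph n P) D ∩ (bipGraph n P).neighborSet (Sum.inr i)).ncard) := by
  set d : Fin n → ZMod 2 := (Sum.inr ⁻¹' D).indicator 1
  have hodd : Sum.inl ⁻¹' oddNbhd (bipGraph n P) D = {a | (P *ᵥ d) a = 1} :=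
    Set.ext (bipGraph.inl_mem_oddNbhd_iff P D)
  have hcount : oddNbhd (bipGraph n P) D ∩ (bipGraph n P).neighborSet (Sum.inr i)
      = Sum.inl '' {a | P a i * (P *ᵥ d) a = 1} := by
    rw [bipGraph.neighborSet_inr, Set.inter_comm, ← Set.image_inter_preimage, hodd]
    simp only [← Set.ofPred_and, ZMod.mul_eq_one_iff_eq_one_and_eq_one]
  have hPtP : Pᵀ * P = 1 := mul_eq_one_comm.mp hP
  rw [hcount, Set.ncard_image_of_injective _ Sum.inl_injective, ← ZMod.natCast_eq_zero_iff_even,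
    ZMod.natCast_ncard_setOf_eq_one]
  calc ∑ a, P a i * (P *ᵥ d) a = (Pᵀ *ᵥ (P *ᵥ d)) i := by simp [Matrix.mulVec, dotProduct]
    _ = d i := by rw [Matrix.mulVec_mulVec, hPtP, Matrix.one_mulVec]
    _ = 0 := Set.indicator_of_notMem (s := Sum.inr ⁻¹' D) hi _

/-- if `P Pᵀ = I` then for every subset `D ⊆ R` and every vertex
`i ∈ R` with `i ∉ D`, the cardinality `|Odd(D) ∩ N_i|` is even. -/
theorem stmt1 (n : ℕ) (hn : 1 ≤ n) (P : Matrix (Fin n) (Fin n) (ZMod 2))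
    (hP : P * Pᵀ = 1) (D : Set (Fin n ⊕ Fin n)) (hD : D ⊆ Set.range Sum.inr)
    (i : Fin n) (hi : Sum.inr i ∉ D) :
    Even ((oddNbhd (bipGraph n P) D ∩ (bipGraph n P).neighborSet (Sum.inr i)).ncard) :=
  stmt1_general n P hP D i hi
end

section
/- Let n ≥ 1, let P be an n × n matrix over 𝔽₂ with P Pᵀ = I, and let G be the associated bipartite graph on V = L ⊔ R. Then for every subset D ⊆ R, the operator U_D = Z_D X_{Odd(D)} stabilizes the graph state: Z_D X_{Odd(D)} |G⟩ = |G⟩. -/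
open Matrix

/-- The quadratic form of a graph: `q(x) = ∑_{{u,v} ∈ E(H)} x_u x_v` over `𝔽₂`. -/
noncomputable def qForm {W : Type*} (H : SimpleGraph W) (x : W → ZMod 2) : ZMod 2 :=
  ∑ᶠ e ∈ H.edgeSet, Sym2.lift ⟨fun u v => x u * x v, fun _ _ => mul_comm _ _⟩ e

/-- The graph state of `H`: the vector in `ℂ^(W → ZMod 2)` with amplitude
`2^{-|W|/2} (-1)^{q(x)}` at the basis label `x`. -/
noncomputable def graphState {W : Type*} (H : SimpleGraph W) : (W → ZMod 2) → ℂ :=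
  fun x => (Real.sqrt 2 : ℂ)⁻¹ ^ Nat.card W * (-1 : ℂ) ^ (qForm H x).val

/-- The Pauli operator `X_S = ∏_{w ∈ S} X_w`, acting by `(X_S ψ)(x) = ψ(x + 1_S)`. -/
noncomputable def XOp {W : Type*} (S : Set W) (ψ : (W → ZMod 2) → ℂ) : (W → ZMod 2) → ℂ :=
  fun x => ψ (x + S.indicator 1)

/-- The Pauli operator `Z_S = ∏_{w ∈ S} Z_w`, acting by
`(Z_S ψ)(x) = (-1)^{∑_{w ∈ S} x_w} ψ(x)`. -/
noncomputable def ZOp {W : Type*} (S : Set W) (ψ : (W → ZMod 2) → ℂ) : (W → ZMod 2) → ℂ :=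
  fun x => (-1 : ℂ) ^ (∑ᶠ w ∈ S, (x w).val) * ψ x

/-! Over `𝔽₂` the indicator of `Odd(S)` is `A *ᵥ 1_S` for the adjacency matrix `A`, which for
the bipartite graph is `fromBlocks 0 P Pᵀ 0`. For `D ⊆ R` with `d = 1_D ∘ inr`, the flip pattern of
`X_{Odd(D)}` is therefore `P d` on `L` and `0` on `R`. Since `q(x) = x_L ⬝ᵥ P x_R`, the flip changes
`q` by `(P d) ⬝ᵥ (P x_R) = d ⬝ᵥ (Pᵀ P x_R) = d ⬝ᵥ x_R`, which is exactly the parity that `Z_D`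
records; the two signs cancel. -/

lemma neg_one_pow_val_add {R : Type*} [Ring R] (u v : ZMod 2) :
    (-1 : R) ^ (u + v).val = (-1) ^ u.val * (-1) ^ v.val := by
  rw [ZMod.val_add, ← neg_one_pow_eq_pow_mod_two (R := R), pow_add]

lemma ZMod.ite_eq_one_eq_mul (t u : ZMod 2) : (if t = 1 then u else 0) = t * u := by
  revert t u; decide

lemma natCast_ncard_eq_sum_indicator {V R : Type*} [Fintype V] [AddCommMonoidWithOne R]
    (s : Set V) : (s.ncard : R) = ∑ v, s.indicator 1 v := by
  classical
  simp [Set.indicator_apply, Finset.sum_boole, Set.ncard_eq_toFinset_card']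

lemma Set.indicator_comp_inl_eq_zero {α β M : Type*} [Zero M] {D : Set (α ⊕ β)}
    (hD : D ⊆ Set.range Sum.inr) (f : α ⊕ β → M) : D.indicator f ∘ Sum.inl = 0 := by
  ext a
  exact Set.indicator_of_notMem (fun ha => by obtain ⟨b, hb⟩ := hD ha; simp at hb) _

lemma Matrix.mulVec_dotProduct_mulVec_of_transpose_mul_self {m k R : Type*} [Fintype m]
    [Fintype k] [DecidableEq k] [CommSemiring R] {P : Matrix m k R} (hP : Pᵀ * P = 1)
    (u v : k → R) : (P *ᵥ u) ⬝ᵥ (P *ᵥ v) = u ⬝ᵥ v := by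
  rw [dotProduct_mulVec, ← vecMul_transpose, vecMul_vecMul, hP, vecMul_one]

lemma ZOp_apply {W : Type*} [Fintype W] (S : Set W) (ψ : (W → ZMod 2) → ℂ) (x : W → ZMod 2) :
    ZOp S ψ x = (-1) ^ (S.indicator 1 ⬝ᵥ x).val * ψ x := by
  classical
  have hparity : ((∑ᶠ w ∈ S, (x w).val : ℕ) : ZMod 2) = S.indicator 1 ⬝ᵥ x := by
    rw [finsum_mem_def, finsum_eq_sum_of_fintype, Nat.cast_sum]
    refine Finset.sum_congr rfl fun w _ => ?_
    by_cases hw : w ∈ S <;> simp [hw]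
  rw [ZOp, ← hparity, ZMod.val_natCast, ← neg_one_pow_eq_pow_mod_two]

lemma oddNbhd_indicator_eq_adjMatrix_mulVec {V : Type*} [Fintype V] (G : SimpleGraph V)
    [DecidableRel G.Adj] (S : Set V) :
    (oddNbhd G S).indicator 1 = G.adjMatrix (ZMod 2) *ᵥ S.indicator 1 := by
  ext v
  have hparity : (oddNbhd G S).indicator 1 v = (((G.neighborSet v ∩ S).ncard : ℕ) : ZMod 2) := by
    by_cases hv : v ∈ oddNbhd G S
    · rw [Set.indicator_of_mem hv, Pi.one_apply, ZMod.natCast_eq_one_iff_odd.mpr hv]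
    · rw [Set.indicator_of_notMem hv,
        ZMod.natCast_eq_zero_iff_even.mpr (Nat.not_odd_iff_even.mp hv)]
  rw [hparity, natCast_ncard_eq_sum_indicator, Set.inter_indicator_one]
  refine Finset.sum_congr rfl fun w _ => ?_
  simp [Set.indicator_apply, SimpleGraph.adjMatrix_apply]

namespace bipGraph

variable {n : ℕ} {P : Matrix (Fin n) (Fin n) (ZMod 2)}

@[simp] lemma adj_inl_inr {a b : Fin n} : (bipGraph n P).Adj (.inl a) (.inr b) ↔ P a b = 1 := by
  simp [bipGraph]

@[simp] lemma adj_inr_inl {a b : Fin n} : (bipGraph n P).Adj (.inr b) (.inl a) ↔ P a b = 1 := by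
  simp [bipGraph]

@[simp] lemma not_adj_inl_inl {a a' : Fin n} : ¬ (bipGraph n P).Adj (.inl a) (.inl a') := by
  simp [bipGraph]

@[simp] lemma not_adj_inr_inr {b b' : Fin n} : ¬ (bipGraph n P).Adj (.inr b) (.inr b') := by
  simp [bipGraph]

lemma adjMatrix_eq [DecidableRel (bipGraph n P).Adj] :
    (bipGraph n P).adjMatrix (ZMod 2) = Matrix.fromBlocks 0 P Pᵀ 0 := by
  ext (a | b) (a' | b') <;> simp [SimpleGraph.adjMatrix_apply, ZMod.ite_eq_one_eq_mul]

lemma oddNbhd_indicator {D : Set (Fin n ⊕ Fin n)} (hD : D ⊆ Set.range Sum.inr) :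
    (oddNbhd (bipGraph n P) D).indicator 1 = Sum.elim (P *ᵥ (D.indicator 1 ∘ Sum.inr)) 0 := by
  classical
  rw [oddNbhd_indicator_eq_adjMatrix_mulVec, adjMatrix_eq, Matrix.fromBlocks_mulVec,
    Set.indicator_comp_inl_eq_zero hD]
  simp

lemma edgeSet_eq : (bipGraph n P).edgeSet =
    (fun p : Fin n × Fin n => s(Sum.inl p.1, Sum.inr p.2)) '' {p | P p.1 p.2 = 1} := by
  ext e
  induction e with
  | _ u v =>
    simp only [SimpleGraph.mem_edgeSet, Set.mem_image, Prod.exists, Sym2.eq_iff]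
    rcases u with a | b <;> rcases v with a' | b' <;> simp [and_comm]

lemma qForm_eq_dotProduct (x : Fin n ⊕ Fin n → ZMod 2) :
    qForm (bipGraph n P) x = (x ∘ Sum.inl) ⬝ᵥ P *ᵥ (x ∘ Sum.inr) := by
  classical
  have hinj : Function.Injective (fun p : Fin n × Fin n => s(Sum.inl p.1, Sum.inr p.2)) := by
    rintro ⟨a, b⟩ ⟨a', b'⟩ h
    simpa [Sym2.eq_iff] using h
  rw [qForm, edgeSet_eq, finsum_mem_image hinj.injOn, finsum_mem_eq_toFinset_sum,
    Set.toFinset_ofPred, Finset.sum_filter, Fintype.sum_prod_type]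
  simp only [Sym2.lift_mk, ZMod.ite_eq_one_eq_mul, dotProduct, mulVec, Finset.mul_sum,
    Function.comp_apply]
  exact Finset.sum_congr rfl fun a _ => Finset.sum_congr rfl fun b _ => by ring

lemma qForm_add_oddNbhd_indicator (hP : P * Pᵀ = 1) {D : Set (Fin n ⊕ Fin n)}
    (hD : D ⊆ Set.range Sum.inr) (x : Fin n ⊕ Fin n → ZMod 2) :
    qForm (bipGraph n P) (x + (oddNbhd (bipGraph n P) D).indicator 1)
      = qForm (bipGraph n P) x + D.indicator 1 ⬝ᵥ x := by
  set d := D.indicator (1 : Fin n ⊕ Fin n → ZMod 2) ∘ Sum.inr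
  have hPP : (P *ᵥ d) ⬝ᵥ (P *ᵥ (x ∘ Sum.inr)) = d ⬝ᵥ (x ∘ Sum.inr) :=
    mulVec_dotProduct_mulVec_of_transpose_mul_self (mul_eq_one_comm.mp hP) _ _
  have hZ : D.indicator 1 ⬝ᵥ x = d ⬝ᵥ (x ∘ Sum.inr) := by
    conv_lhs => rw [← Sum.elim_comp_inl_inr (D.indicator 1), ← Sum.elim_comp_inl_inr x]
    rw [sumElim_dotProduct_sumElim, Set.indicator_comp_inl_eq_zero hD, zero_dotProduct, zero_add]
  rw [qForm_eq_dotProduct, qForm_eq_dotProduct, oddNbhd_indicator hD, hZ, ← hPP]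
  have hL : (x + Sum.elim (P *ᵥ d) 0) ∘ Sum.inl = x ∘ Sum.inl + P *ᵥ d := by ext; simp
  have hR : (x + Sum.elim (P *ᵥ d) 0) ∘ Sum.inr = x ∘ Sum.inr := by ext; simp
  rw [hL, hR, add_dotProduct]

end bipGraph

theorem stmt8_general (n : ℕ) (P : Matrix (Fin n) (Fin n) (ZMod 2))
    (hP : P * Pᵀ = 1) (D : Set (Fin n ⊕ Fin n)) (hD : D ⊆ Set.range Sum.inr) :
    ZOp D (XOp (oddNbhd (bipGraph n P) D) (graphState (bipGraph n P))) =
      graphState (bipGraph n P) := by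
  funext x
  have hcancel : ∀ a q : ZMod 2, a + (q + a) = q := by decide
  rw [ZOp_apply, XOp, graphState, graphState, bipGraph.qForm_add_oddNbhd_indicator hP hD x,
    mul_left_comm, ← neg_one_pow_val_add, hcancel]

/-- for the bipartite graph `G` of `P` with `P Pᵀ = I` and any `D ⊆ R`,
the operator `U_D = Z_D X_{Odd(D)}` stabilizes the graph state:
`Z_D X_{Odd(D)} |G⟩ = |G⟩`. -/
theorem stmt8 (n : ℕ) (hn : 1 ≤ n) (P : Matrix (Fin n) (Fin n) (ZMod 2))
    (hP : P * Pᵀ = 1) (D : Set (Fin n ⊕ Fin n)) (hD : D ⊆ Set.range Sum.inr) :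
    ZOp D (XOp (oddNbhd (bipGraph n P) D) (graphState (bipGraph n P))) =
      graphState (bipGraph n P) :=
  stmt8_general n P hP D hD
end
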